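/- arXiv:1910.03942 — 9 statements merged into one kernel-verified Lean document; each statement's English description precedes it below -/
import Mathlib

section
/- For any function u of class C^{2j+1} on [0,L] with j a positive integer, the integral from 0 to L of D^{2j+1}u(x)·x·u(x) dx equals sum_{k=1}^{j} (-1)^{k+1} [x·D^{k-1}u · D^{(2j+1)-k}u]_0^L + (-1)^j (x/2)[(D^j u)^2]_0^L + sum_{k=1}^{j} (-1)^{k} k [D^{k-1}u · D^{2j-k}u]_0^L + (-1)^{j+1} ((2j+1)/2) ∫_0^L (D^j u)^2 dx. -/
open scoped BigOperators
open Set MeasureTheory intervalIntegral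

noncomputable def D (L : ℝ) (u : ℝ → ℝ) (i : ℕ) (x : ℝ) : ℝ :=
  iteratedDerivWithin i u (Set.Icc 0 L) x

noncomputable def EE (L : ℝ) (u : ℝ → ℝ) (m : ℕ) (x : ℝ) : ℝ :=
  x * D L u m x + (m : ℝ) * D L u (m - 1) x

variable {L : ℝ} {u : ℝ → ℝ} {N : ℕ}

lemma D_cont (hL : 0 < L) (hu : ContDiffOn ℝ (N : ℕ∞) u (Set.Icc 0 L)) {m : ℕ} (hm : m ≤ N) :
    ContinuousOn (D L u m) (Set.Icc 0 L) :=
  hu.continuousOn_iteratedDerivWithin (by exact_mod_cast hm) (uniqueDiffOn_Icc hL)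

lemma D_deriv (hL : 0 < L) (hu : ContDiffOn ℝ (N : ℕ∞) u (Set.Icc 0 L)) {m : ℕ} (hm : m < N) :
    ∀ x ∈ Set.Icc (0:ℝ) L, HasDerivWithinAt (D L u m) (D L u (m+1) x) (Set.Icc 0 L) x := by
  intro x hx
  have hud : UniqueDiffOn ℝ (Set.Icc (0:ℝ) L) := uniqueDiffOn_Icc hL
  have hdiff := hu.differentiableOn_iteratedDerivWithin (m := m) (by exact_mod_cast hm) hud
  have h2 : D L u (m+1) x = derivWithin (D L u m) (Set.Icc 0 L) x :=
    congrFun iteratedDerivWithin_succ x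
  rw [h2]
  exact (hdiff x hx).hasDerivWithinAt

lemma EE_deriv (hL : 0 < L) (hu : ContDiffOn ℝ (N : ℕ∞) u (Set.Icc 0 L)) {m : ℕ}
    (hm : m < N) :
    ∀ x ∈ Set.Icc (0:ℝ) L, HasDerivWithinAt (EE L u m) (EE L u (m+1) x) (Set.Icc 0 L) x := by
  intro x hx
  have h1 : HasDerivWithinAt (fun y => y * D L u m y)
      (1 * D L u m x + x * D L u (m+1) x) (Set.Icc 0 L) x :=
    (hasDerivWithinAt_id x _).mul (D_deriv hL hu hm x hx)
  have h2 : HasDerivWithinAt (fun y => (m : ℝ) * D L u (m-1) y)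
      ((m : ℝ) * D L u m x) (Set.Icc 0 L) x := by
    cases m with
    | zero =>
        simp only [Nat.cast_zero, zero_mul]
        exact hasDerivWithinAt_const x _ 0
    | succ k =>
        have := ((D_deriv hL hu (m := k) (by omega) x hx).const_mul ((k:ℝ)+1))
        simpa using this
  have := h1.add h2
  have heq : EE L u (m+1) x
      = (1 * D L u m x + x * D L u (m+1) x) + (m : ℝ) * D L u m x := by
    simp only [EE, Nat.add_sub_cancel]
    push_cast
    ring
  rw [heq]
  exact this

lemma EE_cont (hL : 0 < L) (hu : ContDiffOn ℝ (N : ℕ∞) u (Set.Icc 0 L)) {m : ℕ} (hm : m ≤ N) :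
    ContinuousOn (EE L u m) (Set.Icc 0 L) :=
  (continuousOn_id.mul (D_cont hL hu hm)).add
    (continuousOn_const.mul (D_cont hL hu (by omega)))

lemma D_intble (hL : 0 < L) (hu : ContDiffOn ℝ (N : ℕ∞) u (Set.Icc 0 L)) {m : ℕ} (hm : m ≤ N) :
    IntervalIntegrable (D L u m) volume 0 L := by
  apply ContinuousOn.intervalIntegrable
  rw [Set.uIcc_of_le hL.le]
  exact D_cont hL hu hm

lemma ibp (hL : 0 < L) (hu : ContDiffOn ℝ (N : ℕ∞) u (Set.Icc 0 L)) {m n : ℕ}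
    (hm : m < N) (hn : n < N) :
    ∫ x in (0:ℝ)..L, EE L u n x * D L u (m+1) x
      = EE L u n L * D L u m L - EE L u n 0 * D L u m 0
        - ∫ x in (0:ℝ)..L, EE L u (n+1) x * D L u m x := by
  refine intervalIntegral.integral_mul_deriv_eq_deriv_mul_of_hasDerivWithinAt
    (u := EE L u n) (u' := EE L u (n+1)) (v := D L u m) (v' := D L u (m+1)) ?_ ?_ ?_ ?_
  · rw [Set.uIcc_of_le hL.le]; exact EE_deriv hL hu hn
  · rw [Set.uIcc_of_le hL.le]; exact D_deriv hL hu hm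
  · apply ContinuousOn.intervalIntegrable
    rw [Set.uIcc_of_le hL.le]; exact EE_cont hL hu hn
  · apply ContinuousOn.intervalIntegrable
    rw [Set.uIcc_of_le hL.le]; exact D_cont hL hu hm

lemma iter (hL : 0 < L) {j : ℕ} (hu : ContDiffOn ℝ (((2*j+1 : ℕ)) : ℕ∞) u (Set.Icc 0 L))
    (n : ℕ) (hn : n ≤ 2*j) :
    ∫ x in (0:ℝ)..L, EE L u 0 x * D L u (2*j+1) x
      = (∑ k ∈ Finset.range n, (-1:ℝ)^k *
          (EE L u k L * D L u (2*j-k) L - EE L u k 0 * D L u (2*j-k) 0))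
        + (-1:ℝ)^n * ∫ x in (0:ℝ)..L, EE L u n x * D L u (2*j+1-n) x := by
  induction n with
  | zero => simp
  | succ n IH =>
    have hn' : n ≤ 2*j := by omega
    rw [IH hn']
    have h1 : 2*j+1-n = (2*j-n)+1 := by omega
    have h2 : 2*j+1-(n+1) = 2*j-n := by omega
    rw [h1, h2, ibp hL hu (m := 2*j-n) (N := 2*j+1) (by omega) (by omega),
      Finset.sum_range_succ]
    ring

theorem stmt_1 (L : ℝ) (hL : 0 < L) (j : ℕ) (hj : 1 ≤ j) (u : ℝ → ℝ)
    (hu : ContDiffOn ℝ ((2 * j + 1 : ℕ) : ℕ∞) u (Set.Icc 0 L)) :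
    ∫ x in (0:ℝ)..L, D L u (2 * j + 1) x * (x * u x) =
      (∑ k ∈ Finset.Icc 1 j, (-1 : ℝ) ^ (k + 1) *
        (L * D L u (k - 1) L * D L u (2 * j + 1 - k) L -
         0 * D L u (k - 1) 0 * D L u (2 * j + 1 - k) 0))
      + (-1 : ℝ) ^ j * ((L / 2) * (D L u j L) ^ 2 - (0 / 2) * (D L u j 0) ^ 2)
      + (∑ k ∈ Finset.Icc 1 j, (-1 : ℝ) ^ k * (k : ℝ) *
        (D L u (k - 1) L * D L u (2 * j - k) L -
         D L u (k - 1) 0 * D L u (2 * j - k) 0))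
      + (-1 : ℝ) ^ (j + 1) * ((2 * (j : ℝ) + 1) / 2) *
        ∫ x in (0:ℝ)..L, (D L u j x) ^ 2 := by
  have hN : (2*j+1 : ℕ) = 2*j+1 := rfl
  -- continuity facts
  have hcj : ContinuousOn (D L u j) (Set.Icc 0 L) := D_cont hL hu (by omega)
  have hcj1 : ContinuousOn (D L u (j+1)) (Set.Icc 0 L) := D_cont hL hu (by omega)
  have hcjm : ContinuousOn (D L u (j-1)) (Set.Icc 0 L) := D_cont hL hu (by omega)
  -- integrability facts
  have hIsq : IntervalIntegrable (fun x => (D L u j x)^2) volume 0 L := by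
    apply ContinuousOn.intervalIntegrable; rw [Set.uIcc_of_le hL.le]; exact hcj.pow 2
  have hIA : IntervalIntegrable (fun x => (x * D L u j x) * D L u (j+1) x) volume 0 L := by
    apply ContinuousOn.intervalIntegrable; rw [Set.uIcc_of_le hL.le]
    exact (continuousOn_id.mul hcj).mul hcj1
  have hIB : IntervalIntegrable (fun x => (j:ℝ) * (D L u (j-1) x * D L u (j+1) x)) volume 0 L := by
    apply ContinuousOn.intervalIntegrable; rw [Set.uIcc_of_le hL.le]
    exact continuousOn_const.mul (hcjm.mul hcj1)
  -- start : rewrite LHS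
  have hstart : ∫ x in (0:ℝ)..L, D L u (2*j+1) x * (x * u x)
      = ∫ x in (0:ℝ)..L, EE L u 0 x * D L u (2*j+1) x := by
    apply intervalIntegral.integral_congr
    intro x hx
    simp only [EE, D, iteratedDerivWithin_zero, Nat.cast_zero, zero_mul, add_zero]
    ring
  have hiter := iter hL hu j (by omega)
  rw [show 2*j+1-j = j+1 from by omega] at hiter
  -- split remainder integral
  have hsplit : ∫ x in (0:ℝ)..L, EE L u j x * D L u (j+1) x
      = (∫ x in (0:ℝ)..L, (x * D L u j x) * D L u (j+1) x)
        + ∫ x in (0:ℝ)..L, (j:ℝ) * (D L u (j-1) x * D L u (j+1) x) := by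
    rw [← intervalIntegral.integral_add hIA hIB]
    apply intervalIntegral.integral_congr
    intro x hx
    simp only [EE]; ring
  -- A identity
  have hA : ∫ x in (0:ℝ)..L, (x * D L u j x) * D L u (j+1) x
      = (L * D L u j L) * D L u j L - (0 * D L u j 0) * D L u j 0
        - ∫ x in (0:ℝ)..L, (1 * D L u j x + x * D L u (j+1) x) * D L u j x := by
    refine intervalIntegral.integral_mul_deriv_eq_deriv_mul_of_hasDerivWithinAt
      (u := fun x => x * D L u j x) (u' := fun x => 1 * D L u j x + x * D L u (j+1) x)
      (v := D L u j) (v' := D L u (j+1)) ?_ ?_ ?_ ?_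
    · rw [Set.uIcc_of_le hL.le]
      intro x hx
      exact (hasDerivWithinAt_id x _).mul (D_deriv hL hu (by omega) x hx)
    · rw [Set.uIcc_of_le hL.le]; exact D_deriv hL hu (by omega)
    · apply ContinuousOn.intervalIntegrable; rw [Set.uIcc_of_le hL.le]
      exact (continuousOn_const.mul hcj).add (continuousOn_id.mul hcj1)
    · apply ContinuousOn.intervalIntegrable; rw [Set.uIcc_of_le hL.le]; exact hcj1
  have hA2 : ∫ x in (0:ℝ)..L, (1 * D L u j x + x * D L u (j+1) x) * D L u j x
      = (∫ x in (0:ℝ)..L, (D L u j x)^2)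
        + ∫ x in (0:ℝ)..L, (x * D L u j x) * D L u (j+1) x := by
    rw [← intervalIntegral.integral_add hIsq hIA]
    apply intervalIntegral.integral_congr
    intro x hx; ring
  have hAval : ∫ x in (0:ℝ)..L, (x * D L u j x) * D L u (j+1) x
      = L * D L u j L * D L u j L / 2 - (1/2) * ∫ x in (0:ℝ)..L, (D L u j x)^2 := by
    rw [hA2] at hA; linarith [hA]
  -- B identity
  have hB : ∫ x in (0:ℝ)..L, D L u (j-1) x * D L u (j+1) x
      = D L u (j-1) L * D L u j L - D L u (j-1) 0 * D L u j 0
        - ∫ x in (0:ℝ)..L, D L u j x * D L u j x := by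
    refine intervalIntegral.integral_mul_deriv_eq_deriv_mul_of_hasDerivWithinAt
      (u := D L u (j-1)) (u' := D L u j) (v := D L u j) (v' := D L u (j+1)) ?_ ?_ ?_ ?_
    · rw [Set.uIcc_of_le hL.le]
      intro x hx
      have := D_deriv hL hu (m := j-1) (by omega) x hx
      rwa [show j-1+1 = j from by omega] at this
    · rw [Set.uIcc_of_le hL.le]; exact D_deriv hL hu (by omega)
    · apply ContinuousOn.intervalIntegrable; rw [Set.uIcc_of_le hL.le]; exact hcj
    · apply ContinuousOn.intervalIntegrable; rw [Set.uIcc_of_le hL.le]; exact hcj1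
  have hBsq : ∫ x in (0:ℝ)..L, D L u j x * D L u j x
      = ∫ x in (0:ℝ)..L, (D L u j x)^2 := by
    apply intervalIntegral.integral_congr; intro x hx; ring
  rw [hBsq] at hB
  -- the boundary sum split
  set h : ℕ → ℝ := fun k => (-1:ℝ)^k * (k:ℝ) *
      (D L u (k-1) L * D L u (2*j-k) L - D L u (k-1) 0 * D L u (2*j-k) 0) with hh
  set f : ℕ → ℝ := fun k => (-1:ℝ)^(k+1) *
      (L * D L u (k-1) L * D L u (2*j+1-k) L - 0 * D L u (k-1) 0 * D L u (2*j+1-k) 0) with hf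
  have hSsplit : (∑ k ∈ Finset.range j, (-1:ℝ)^k *
        (EE L u k L * D L u (2*j-k) L - EE L u k 0 * D L u (2*j-k) 0))
      = (∑ k ∈ Finset.range j, f (1+k)) + ∑ k ∈ Finset.range j, h k := by
    rw [← Finset.sum_add_distrib]
    apply Finset.sum_congr rfl
    intro k hk
    have e1 : ((-1:ℝ))^(1+k+1) = (-1)^k := by
      rw [show 1+k+1 = k+2 from by omega, pow_add]; norm_num
    simp only [hf, hh, EE, e1, show 1+k-1 = k from by omega,
      show 2*j+1-(1+k) = 2*j-k from by omega]
    ring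
  have hIcc : ∀ g : ℕ → ℝ, ∑ i ∈ Finset.Icc 1 j, g i = ∑ i ∈ Finset.range j, g (1+i) := by
    intro g
    rw [← Finset.Ico_add_one_right_eq_Icc, Finset.sum_Ico_eq_sum_range]
    simp
  have hT3 : ∑ k ∈ Finset.range j, h k = (∑ k ∈ Finset.Icc 1 j, h k) - h j := by
    have e2 : ∑ k ∈ Finset.range j, h k + h j = (∑ i ∈ Finset.range j, h (1+i)) + h 0 := by
      rw [← Finset.sum_range_succ, Finset.sum_range_succ' h j]
      simp [Nat.add_comm]
    have h0 : h 0 = 0 := by simp [hh]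
    rw [hIcc h]
    linarith [e2]
  have hhj : h j = (-1:ℝ)^j * (j:ℝ) *
      (D L u (j-1) L * D L u j L - D L u (j-1) 0 * D L u j 0) := by
    simp only [hh, show 2*j-j = j from by omega]
  -- assemble
  rw [hstart, hiter, hsplit, hAval, intervalIntegral.integral_const_mul, hB, hSsplit, hT3,
    hhj, ← hIcc f]
  simp only [hf, hh]
  ring
end

section
/- For any function u of class C^{2l+1} on [0,L] with l a positive integer, sum_{j=1}^{l} (-1)^{j+1} ∫_0^L D^{2j+1}u(x)·x·u(x) dx = sum_{i=0}^{l-1} [x·D^i u · (sum_{k=1}^{l-i} (-1)^{k+1} D^{2k+i}u)]_0^L + sum_{i=0}^{l-1} (1+i) [D^i u · (sum_{k=1}^{l-i} (-1)^{k} D^{2k+i-1}u)]_0^L − (x/2) sum_{j=1}^{l} [(D^j u)^2]_0^L + sum_{j=1}^{l} ((2j+1)/2) ∫_0^L (D^j u)^2 dx. -/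
/-!
For each `j`, with `a i = Dⁱu(x)`, the function
`Φⱼ(x) = ∑_{i<j} (-1)ⁱ (x aᵢ a_{2j-i} - (i+1) aᵢ a_{2j-1-i}) + (-1)ʲ (x/2) aⱼ²`
is an explicit antiderivative of `x u D^{2j+1}u + (-1)ʲ (2j+1)/2 (Dʲu)²`: on differentiating,
the terms carrying the factor `x` and the remaining ones each telescope. The fundamental theorem
of calculus gives the identity for a single `j`, and the boundary terms of the theorem are
`∑ⱼ (-1)^{j+1} Φⱼ` regrouped along `k = j - i`.
-/

open scoped BigOperators

open Finset
open scoped ContDiff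

theorem ContDiffOn.hasDerivWithinAt_iteratedDerivWithin {𝕜 F : Type*} [NontriviallyNormedField 𝕜]
    [NormedAddCommGroup F] [NormedSpace 𝕜 F] {f : 𝕜 → F} {s : Set 𝕜} {x : 𝕜} {n : ℕ∞ω} {m : ℕ}
    (h : ContDiffOn 𝕜 n f s) (hmn : m < n) (hs : UniqueDiffOn 𝕜 s) (hx : x ∈ s) :
    HasDerivWithinAt (iteratedDerivWithin m f s) (iteratedDerivWithin (m + 1) f s x) s x := by
  rw [iteratedDerivWithin_succ]
  exact (h.differentiableOn_iteratedDerivWithin hmn hs x hx).hasDerivWithinAt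

noncomputable def potential (a : ℕ → ℝ) (j : ℕ) (x : ℝ) : ℝ :=
  ∑ i ∈ range j, (-1) ^ i * (x * a i * a (2 * j - i) - (i + 1) * a i * a (2 * j - 1 - i)) +
    (-1) ^ j * (x / 2 * a j ^ 2)

theorem sum_range_sum_Icc_sub (l : ℕ) (G : ℕ → ℕ → ℝ) :
    ∑ i ∈ range l, ∑ k ∈ Icc 1 (l - i), G i k =
      ∑ j ∈ Icc 1 l, ∑ i ∈ range j, G i (j - i) := by
  calc _ = ∑ i ∈ range l, ∑ j ∈ Ioc i l, G i (j - i) := by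
        refine sum_congr rfl fun i hi ↦ sum_nbij' (· + i) (· - i) ?_ ?_ ?_ ?_ ?_ <;>
          intro k hk <;> simp_all <;> omega
    _ = _ := sum_comm' fun i j ↦ by simp only [mem_range, mem_Ioc, mem_Icc]; omega

theorem sum_neg_one_pow_mul_potential (a : ℕ → ℝ) (l : ℕ) (x : ℝ) :
    ∑ j ∈ Icc 1 l, (-1) ^ (j + 1) * potential a j x =
      ∑ i ∈ range l, x * a i * ∑ k ∈ Icc 1 (l - i), (-1) ^ (k + 1) * a (2 * k + i) +
      ∑ i ∈ range l,
        (1 + (i : ℝ)) * (a i * ∑ k ∈ Icc 1 (l - i), (-1) ^ k * a (2 * k + i - 1)) -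
      x / 2 * ∑ j ∈ Icc 1 l, a j ^ 2 := by
  simp only [mul_sum, sum_range_sum_Icc_sub l, ← sum_add_distrib, ← sum_sub_distrib]
  refine sum_congr rfl fun j _ ↦ ?_
  have hsign : ∀ m n : ℕ, m % 2 = n % 2 → (-1 : ℝ) ^ m = (-1) ^ n := fun m n h ↦ by
    rw [neg_one_pow_eq_pow_mod_two, h, ← neg_one_pow_eq_pow_mod_two]
  rw [potential, mul_add, mul_sum, sub_eq_add_neg]
  congr 1
  · refine sum_congr rfl fun i hi ↦ ?_
    have hij : i < j := mem_range.mp hi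
    rw [show 2 * (j - i) + i = 2 * j - i by omega, show 2 * j - i - 1 = 2 * j - 1 - i by omega,
      hsign (j - i + 1) (j + 1 + i) (by omega), hsign (j - i) (j + 1 + i + 1) (by omega)]
    ring
  · rw [← mul_assoc, ← pow_add, hsign (j + 1 + j) 1 (by omega)]
    ring

theorem hasDerivWithinAt_potential {a : ℕ → ℝ → ℝ} {s : Set ℝ} {x : ℝ} (j : ℕ)
    (ha : ∀ i ≤ 2 * j, HasDerivWithinAt (a i) (a (i + 1) x) s x) :
    HasDerivWithinAt (fun y ↦ potential (a · y) j y)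
      (a (2 * j + 1) x * (x * a 0 x) + (-1) ^ j * ((2 * j + 1) / 2) * a j x ^ 2) s x := by
  have hid : HasDerivWithinAt (fun y ↦ y) 1 s x := hasDerivWithinAt_id x s
  -- each summand's derivative is written as `g i - g (i + 1)`, so that the sum telescopes
  have hterm : ∀ i ∈ range j, HasDerivWithinAt
      (fun y ↦ (-1) ^ i * (y * a i y * a (2 * j - i) y - (i + 1) * a i y * a (2 * j - 1 - i) y))
      ((-1) ^ i * (x * a i x * a (2 * j + 1 - i) x - i * a i x * a (2 * j - i) x) -
        (-1) ^ (i + 1) * (x * a (i + 1) x * a (2 * j + 1 - (i + 1)) x -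
          (i + 1 : ℕ) * a (i + 1) x * a (2 * j - (i + 1)) x)) s x := by
    intro i hi
    have hij : i < j := mem_range.mp hi
    have h := (((hid.mul (ha i (by omega))).mul (ha (2 * j - i) (by omega))).sub
      (((ha i (by omega)).const_mul ((i : ℝ) + 1)).mul (ha (2 * j - 1 - i) (by omega)))).const_mul
        ((-1 : ℝ) ^ i)
    refine h.congr_deriv ?_
    rw [show 2 * j + 1 - i = 2 * j - i + 1 by omega, show 2 * j + 1 - (i + 1) = 2 * j - i by omega,
      show 2 * j - (i + 1) = 2 * j - 1 - i by omega, show 2 * j - 1 - i + 1 = 2 * j - i by omega]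
    simp only [Pi.mul_apply]
    push_cast
    ring
  have h := (HasDerivWithinAt.fun_sum hterm).add
    (((hid.div_const 2).mul ((ha j (by omega)).pow 2)).const_mul ((-1 : ℝ) ^ j))
  rw [sum_range_sub'] at h
  refine h.congr_deriv ?_
  simp only [Nat.sub_zero, Nat.cast_zero, zero_mul, sub_zero, pow_zero, one_mul,
    show 2 * j + 1 - j = j + 1 by omega, show 2 * j - j = j by omega, Pi.pow_apply]
  ring

theorem integral_mul_id_mul_eq_potential_sub {a : ℕ → ℝ → ℝ} {p q : ℝ} (hpq : p ≤ q)
    (j : ℕ) (ha : ∀ i ≤ 2 * j, ∀ x ∈ Set.Icc p q,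
      HasDerivWithinAt (a i) (a (i + 1) x) (Set.Icc p q) x)
    (hc : ContinuousOn (a (2 * j + 1)) (Set.Icc p q)) :
    ∫ x in p..q, a (2 * j + 1) x * (x * a 0 x) =
      potential (a · q) j q - potential (a · p) j p -
        (-1) ^ j * ((2 * j + 1) / 2) * ∫ x in p..q, a j x ^ 2 := by
  have hcont : ∀ i ≤ 2 * j, ContinuousOn (a i) (Set.Icc p q) := fun i hi x hx ↦
    (ha i hi x hx).continuousWithinAt
  have hint₁ : IntervalIntegrable (fun x ↦ a (2 * j + 1) x * (x * a 0 x))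
      MeasureTheory.volume p q :=
    ContinuousOn.intervalIntegrable_of_Icc hpq (hc.mul (continuousOn_id.mul (hcont 0 (by omega))))
  have hint₂ : IntervalIntegrable (fun x ↦ (-1) ^ j * ((2 * j + 1) / 2) * a j x ^ 2)
      MeasureTheory.volume p q :=
    ContinuousOn.intervalIntegrable_of_Icc hpq
      (continuousOn_const.mul ((hcont j (by omega)).pow 2))
  have hftc := intervalIntegral.integral_eq_sub_of_hasDerivAt_of_le hpq
    (fun x hx ↦ (hasDerivWithinAt_potential j fun i hi ↦ ha i hi x hx).continuousWithinAt)
    (fun x hx ↦ (hasDerivWithinAt_potential j fun i hi ↦ ha i hi x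
      (Set.Ioo_subset_Icc_self hx)).hasDerivAt (Icc_mem_nhds hx.1 hx.2))
    (hint₁.add hint₂)
  rw [intervalIntegral.integral_add hint₁ hint₂, intervalIntegral.integral_const_mul] at hftc
  linarith

theorem stmt_3_general (L : ℝ) (hL : 0 < L) (l : ℕ) (u : ℝ → ℝ)
    (hu : ContDiffOn ℝ ((2 * l + 1 : ℕ) : ℕ∞) u (Set.Icc 0 L)) :
    ∑ j ∈ Finset.Icc 1 l, (-1 : ℝ) ^ (j + 1) *
        ∫ x in (0:ℝ)..L, D L u (2 * j + 1) x * (x * u x) =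
      (∑ i ∈ Finset.range l,
        (L * D L u i L * (∑ k ∈ Finset.Icc 1 (l - i), (-1 : ℝ) ^ (k + 1) * D L u (2 * k + i) L) -
         0 * D L u i 0 * (∑ k ∈ Finset.Icc 1 (l - i), (-1 : ℝ) ^ (k + 1) * D L u (2 * k + i) 0)))
      + (∑ i ∈ Finset.range l, (1 + (i : ℝ)) *
        (D L u i L * (∑ k ∈ Finset.Icc 1 (l - i), (-1 : ℝ) ^ k * D L u (2 * k + i - 1) L) -
         D L u i 0 * (∑ k ∈ Finset.Icc 1 (l - i), (-1 : ℝ) ^ k * D L u (2 * k + i - 1) 0)))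
      - (∑ j ∈ Finset.Icc 1 l, ((L / 2) * (D L u j L) ^ 2 - (0 / 2) * (D L u j 0) ^ 2))
      + ∑ j ∈ Finset.Icc 1 l, ((2 * (j : ℝ) + 1) / 2) *
          ∫ x in (0:ℝ)..L, (D L u j x) ^ 2 := by
  replace hu : ContDiffOn ℝ (2 * l + 1 : ℕ) u (Set.Icc 0 L) := hu
  have hs := uniqueDiffOn_Icc hL
  have hD0 : D L u 0 = u := iteratedDerivWithin_zero
  have hD : ∀ i ≤ 2 * l, ∀ x ∈ Set.Icc 0 L,
      HasDerivWithinAt (D L u i) (D L u (i + 1) x) (Set.Icc 0 L) x := fun i hi x hx ↦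
    hu.hasDerivWithinAt_iteratedDerivWithin (by exact_mod_cast (by omega : i < 2 * l + 1)) hs hx
  have hstep : ∀ j ∈ Icc 1 l,
      (-1) ^ (j + 1) * ∫ x in (0:ℝ)..L, D L u (2 * j + 1) x * (x * u x) =
      (-1) ^ (j + 1) * (potential (D L u · L) j L - potential (D L u · 0) j 0) +
        (2 * j + 1) / 2 * ∫ x in (0:ℝ)..L, D L u j x ^ 2 := by
    intro j hj
    have hjl := (mem_Icc.mp hj).2
    have h := integral_mul_id_mul_eq_potential_sub hL.le j (fun i hi ↦ hD i (by omega))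
      (hu.continuousOn_iteratedDerivWithin
        (by exact_mod_cast (by omega : 2 * j + 1 ≤ 2 * l + 1)) hs)
    have hsq : ((-1 : ℝ) ^ j) ^ 2 = 1 := by rw [← pow_mul, pow_mul', neg_one_sq, one_pow]
    rw [hD0] at h
    rw [h, pow_succ]
    linear_combination ((2 * j + 1) / 2 * ∫ x in (0:ℝ)..L, D L u j x ^ 2) * hsq
  rw [sum_congr rfl hstep, sum_add_distrib]
  simp only [mul_sub, sum_sub_distrib, sum_neg_one_pow_mul_potential, mul_sum]
  ring

theorem stmt_3 (L : ℝ) (hL : 0 < L) (l : ℕ) (hl : 1 ≤ l) (u : ℝ → ℝ)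
    (hu : ContDiffOn ℝ ((2 * l + 1 : ℕ) : ℕ∞) u (Set.Icc 0 L)) :
    ∑ j ∈ Finset.Icc 1 l, (-1 : ℝ) ^ (j + 1) *
        ∫ x in (0:ℝ)..L, D L u (2 * j + 1) x * (x * u x) =
      (∑ i ∈ Finset.range l,
        (L * D L u i L * (∑ k ∈ Finset.Icc 1 (l - i), (-1 : ℝ) ^ (k + 1) * D L u (2 * k + i) L) -
         0 * D L u i 0 * (∑ k ∈ Finset.Icc 1 (l - i), (-1 : ℝ) ^ (k + 1) * D L u (2 * k + i) 0)))
      + (∑ i ∈ Finset.range l, (1 + (i : ℝ)) *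
        (D L u i L * (∑ k ∈ Finset.Icc 1 (l - i), (-1 : ℝ) ^ k * D L u (2 * k + i - 1) L) -
         D L u i 0 * (∑ k ∈ Finset.Icc 1 (l - i), (-1 : ℝ) ^ k * D L u (2 * k + i - 1) 0)))
      - (∑ j ∈ Finset.Icc 1 l, ((L / 2) * (D L u j L) ^ 2 - (0 / 2) * (D L u j 0) ^ 2))
      + ∑ j ∈ Finset.Icc 1 l, ((2 * (j : ℝ) + 1) / 2) *
          ∫ x in (0:ℝ)..L, (D L u j x) ^ 2 :=
  stmt_3_general L hL l u hu
end

section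
/- Let u be a C^5 function on [0,L] satisfying u(0) = u(L) = D^2u(L) = 0, D^3u(0) = a_{31} Du(0), and D^3u(L) = b_{31} Du(L), where b_{31} > 1/2 and a_{31} < 1/2. Then ∫_0^L (D^3u − D^5u)(x) u(x) dx ≥ (b_{31} − 1/2)(Du(L))^2 + (1/2 − a_{31})(Du(0))^2 + (1/4)(D^2u(0))^2 ≥ 0. -/
open Set

theorem ContDiffOn.hasDerivWithinAt_iteratedDerivWithin_s6 {s : Set ℝ} {u : ℝ → ℝ}
    {n : WithTop ℕ∞} (hu : ContDiffOn ℝ n u s) (hs : UniqueDiffOn ℝ s) {i : ℕ}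
    (hi : (i : WithTop ℕ∞) < n) {x : ℝ} (hx : x ∈ s) :
    HasDerivWithinAt (iteratedDerivWithin i u s) (iteratedDerivWithin (i + 1) u s x) s x := by
  rw [iteratedDerivWithin_succ]
  exact (hu.differentiableOn_iteratedDerivWithin hi hs x hx).hasDerivWithinAt

section KawaharaFlux

variable {s : Set ℝ} {u : ℝ → ℝ}

noncomputable def kawaharaFlux (u : ℝ → ℝ) (s : Set ℝ) (x : ℝ) : ℝ :=
  let d i := iteratedDerivWithin i u s x
  d 2 * u x - d 1 ^ 2 / 2 - d 4 * u x + d 3 * d 1 - d 2 ^ 2 / 2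

theorem hasDerivWithinAt_kawaharaFlux (hu : ContDiffOn ℝ 5 u s) (hs : UniqueDiffOn ℝ s)
    {x : ℝ} (hx : x ∈ s) :
    HasDerivWithinAt (kawaharaFlux u s)
      ((iteratedDerivWithin 3 u s x - iteratedDerivWithin 5 u s x) * u x) s x := by
  have hd (i : ℕ) (hi : i < 5) := hu.hasDerivWithinAt_iteratedDerivWithin_s6 hs
    (by exact_mod_cast hi) hx
  have hu' : HasDerivWithinAt u (iteratedDerivWithin 1 u s x) s x := by
    simpa only [iteratedDerivWithin_zero] using hd 0 (by norm_num)
  have h1 := hd 1 (by norm_num)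
  have h2 := hd 2 (by norm_num)
  have h3 := hd 3 (by norm_num)
  have h4 := hd 4 (by norm_num)
  refine (((((h2.mul hu').sub ((h1.pow 2).div_const 2)).sub (h4.mul hu')).add
    (h3.mul h1)).sub ((h2.pow 2).div_const 2)).congr_deriv ?_
  ring

theorem integral_iteratedDerivWithin_three_sub_five_mul_self {a b : ℝ} (hab : a < b)
    (hu : ContDiffOn ℝ 5 u (Icc a b)) :
    ∫ x in a..b, (iteratedDerivWithin 3 u (Icc a b) x - iteratedDerivWithin 5 u (Icc a b) x) * u x
      = kawaharaFlux u (Icc a b) b - kawaharaFlux u (Icc a b) a := by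
  have hs := uniqueDiffOn_Icc hab
  have hF (x) (hx : x ∈ Icc a b) := hasDerivWithinAt_kawaharaFlux hu hs hx
  refine intervalIntegral.integral_eq_sub_of_hasDeriv_right_of_le hab.le
    (fun x hx => (hF x hx).continuousWithinAt) (fun x hx => ?_) ?_
  · exact ((hF x (Ioo_subset_Icc_self hx)).hasDerivAt
      (Icc_mem_nhds hx.1 hx.2)).hasDerivWithinAt
  · refine ContinuousOn.intervalIntegrable ?_
    rw [uIcc_of_le hab.le]
    exact ((hu.continuousOn_iteratedDerivWithin (by norm_num) hs).sub
      (hu.continuousOn_iteratedDerivWithin (by norm_num) hs)).mul hu.continuousOn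

end KawaharaFlux

theorem stmt_6 (L : ℝ) (hL : 0 < L) (a31 b31 : ℝ) (ha : a31 < 1 / 2) (hb : 1 / 2 < b31)
    (u : ℝ → ℝ) (hu : ContDiffOn ℝ 5 u (Set.Icc 0 L))
    (h0 : u 0 = 0) (hLv : u L = 0) (h2L : D L u 2 L = 0)
    (h30 : D L u 3 0 = a31 * D L u 1 0) (h3L : D L u 3 L = b31 * D L u 1 L) :
    (∫ x in (0:ℝ)..L, (D L u 3 x - D L u 5 x) * u x) ≥
      (b31 - 1 / 2) * (D L u 1 L) ^ 2 + (1 / 2 - a31) * (D L u 1 0) ^ 2 +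
        (1 / 4) * (D L u 2 0) ^ 2 ∧
    (b31 - 1 / 2) * (D L u 1 L) ^ 2 + (1 / 2 - a31) * (D L u 1 0) ^ 2 +
        (1 / 4) * (D L u 2 0) ^ 2 ≥ 0 := by
  simp only [D] at *
  have hI := integral_iteratedDerivWithin_three_sub_five_mul_self hL hu
  have hFL : kawaharaFlux u (Icc 0 L) L =
      (b31 - 1 / 2) * iteratedDerivWithin 1 u (Icc 0 L) L ^ 2 := by
    simp only [kawaharaFlux, hLv, h2L, h3L]
    ring
  have hF0 : kawaharaFlux u (Icc 0 L) 0 = (a31 - 1 / 2) * iteratedDerivWithin 1 u (Icc 0 L) 0 ^ 2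
      - iteratedDerivWithin 2 u (Icc 0 L) 0 ^ 2 / 2 := by
    simp only [kawaharaFlux, h0, h30]
    ring
  rw [hI, hFL, hF0]
  constructor
  · nlinarith [sq_nonneg (iteratedDerivWithin 2 u (Icc 0 L) 0)]
  · nlinarith [sq_nonneg (iteratedDerivWithin 1 u (Icc 0 L) L),
      sq_nonneg (iteratedDerivWithin 1 u (Icc 0 L) 0),
      sq_nonneg (iteratedDerivWithin 2 u (Icc 0 L) 0)]
end

section
/- Let λ > 0 and let u be a C^5 function on [0,L] satisfying λu + D^3u − D^5u = 0 on (0,L) together with the boundary conditions u(0) = u(L) = D^2u(L) = 0, D^3u(0) = a_{31} Du(0), D^3u(L) = b_{31} Du(L), where a_{31} < 1/2 and b_{31} > 1/2. Then u is identically zero on [0,L]. -/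
open Set Filter Topology

theorem hasDerivAt_iteratedDerivWithin {𝕜 F : Type*} [NontriviallyNormedField 𝕜]
    [NormedAddCommGroup F] [NormedSpace 𝕜 F] {f : 𝕜 → F} {s : Set 𝕜} {n : WithTop ℕ∞}
    {i : ℕ} {x : 𝕜} (hf : ContDiffOn 𝕜 n f s) (hs : UniqueDiffOn 𝕜 s) (hi : i < n)
    (hx : s ∈ 𝓝 x) :
    HasDerivAt (iteratedDerivWithin i f s) (iteratedDerivWithin (i + 1) f s x) x := by
  rw [iteratedDerivWithin_succ]
  exact ((hf.differentiableOn_iteratedDerivWithin hi hs) x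
    (mem_of_mem_nhds hx)).hasDerivWithinAt.hasDerivAt hx

/-- `G` is monotone on `[a, b]` with `G b ≤ G a`, hence constant there. -/
theorem eqOn_zero_of_hasDerivAt_nonneg_of_right_le_left {G g : ℝ → ℝ} {a b : ℝ}
    (hG : ContinuousOn G (Icc a b)) (hderiv : ∀ x ∈ Ioo a b, HasDerivAt G (g x) x)
    (hg : ∀ x ∈ Ioo a b, 0 ≤ g x) (hba : G b ≤ G a) : EqOn g 0 (Ioo a b) := by
  intro x hx
  have hmono : MonotoneOn G (Icc a b) := by
    refine monotoneOn_of_deriv_nonneg (convex_Icc a b) hG (fun y hy => ?_) (fun y hy => ?_)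
    all_goals rw [interior_Icc] at hy
    · exact (hderiv y hy).differentiableAt.differentiableWithinAt
    · exact (hderiv y hy).deriv ▸ hg y hy
  have hab : a ≤ b := (hx.1.trans hx.2).le
  have hconst : ∀ y ∈ Icc a b, G y = G a := fun y hy =>
    le_antisymm ((hmono hy (right_mem_Icc.2 hab) hy.2).trans hba)
      (hmono (left_mem_Icc.2 hab) hy hy.1)
  have hGx : G =ᶠ[𝓝 x] fun _ => G a := eventually_of_mem (Icc_mem_nhds hx.1 hx.2) hconst
  exact (hderiv x hx).unique ((hasDerivAt_const x (G a)).congr_of_eventuallyEq hGx)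

namespace KdVEnergy

/-- Evaluated on the derivative sequence `v i = Dⁱu`. -/
noncomputable def energy (v : ℕ → ℝ → ℝ) (x : ℝ) : ℝ :=
  v 0 x * v 4 x - v 1 x * v 3 x + v 2 x ^ 2 / 2 - v 0 x * v 2 x + v 1 x ^ 2 / 2

variable {v : ℕ → ℝ → ℝ}

theorem continuousOn_energy {s : Set ℝ} (hv : ∀ i ≤ 4, ContinuousOn (v i) s) :
    ContinuousOn (energy v) s := by
  obtain ⟨h0, h1, h2, h3, h4⟩ : ContinuousOn (v 0) s ∧ ContinuousOn (v 1) s ∧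
      ContinuousOn (v 2) s ∧ ContinuousOn (v 3) s ∧ ContinuousOn (v 4) s :=
    ⟨hv 0 (by norm_num), hv 1 (by norm_num), hv 2 (by norm_num), hv 3 (by norm_num), hv 4 le_rfl⟩
  exact ((((h0.mul h4).sub (h1.mul h3)).add ((h2.pow 2).div_const 2)).sub (h0.mul h2)).add
    ((h1.pow 2).div_const 2)

theorem hasDerivAt_energy {x : ℝ} (hv : ∀ i < 5, HasDerivAt (v i) (v (i + 1) x) x) :
    HasDerivAt (energy v) (v 0 x * (v 5 x - v 3 x)) x := by
  have h0 := hv 0 (by norm_num)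
  have h1 := hv 1 (by norm_num)
  have h2 := hv 2 (by norm_num)
  have h3 := hv 3 (by norm_num)
  have h4 := hv 4 (by norm_num)
  refine (((((h0.mul h4).sub (h1.mul h3)).add ((h2.pow 2).div_const 2)).sub (h0.mul h2)).add
    ((h1.pow 2).div_const 2)).congr_deriv ?_
  norm_num
  ring

end KdVEnergy

open KdVEnergy

theorem stmt_7 (L : ℝ) (hL : 0 < L) (lam : ℝ) (hlam : 0 < lam)
    (a31 b31 : ℝ) (ha : a31 < 1 / 2) (hb : 1 / 2 < b31)
    (u : ℝ → ℝ) (hu : ContDiffOn ℝ 5 u (Set.Icc 0 L))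
    (heq : ∀ x ∈ Set.Ioo (0:ℝ) L, lam * u x + D L u 3 x - D L u 5 x = 0)
    (h0 : u 0 = 0) (hLv : u L = 0) (h2L : D L u 2 L = 0)
    (h30 : D L u 3 0 = a31 * D L u 1 0) (h3L : D L u 3 L = b31 * D L u 1 L) :
    ∀ x ∈ Set.Icc (0:ℝ) L, u x = 0 := by
  have hs : UniqueDiffOn ℝ (Icc 0 L) := uniqueDiffOn_Icc hL
  have hD0 : D L u 0 = u := iteratedDerivWithin_zero
  have hcont : ContinuousOn (energy (D L u)) (Icc 0 L) := continuousOn_energy fun i hi =>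
    hu.continuousOn_iteratedDerivWithin (by norm_cast; omega) hs
  have hderiv : ∀ x ∈ Ioo 0 L, HasDerivAt (energy (D L u)) (lam * u x ^ 2) x := by
    intro x hx
    convert hasDerivAt_energy (v := D L u) fun i hi =>
      hasDerivAt_iteratedDerivWithin hu hs (by exact_mod_cast hi) (Icc_mem_nhds hx.1 hx.2) using 1
    rw [hD0]
    linear_combination u x * heq x hx
  have hend : energy (D L u) L ≤ energy (D L u) 0 := by
    simp only [energy, hD0, h0, hLv, h2L, h30, h3L]
    nlinarith [sq_nonneg (D L u 1 0), sq_nonneg (D L u 1 L), sq_nonneg (D L u 2 0)]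
  have hzero := eqOn_zero_of_hasDerivAt_nonneg_of_right_le_left hcont hderiv
    (fun x _ => by positivity) hend
  rintro x ⟨hx0, hxL⟩
  rcases hx0.eq_or_lt with rfl | hx0
  · exact h0
  rcases hxL.eq_or_lt with rfl | hxL
  · exact hLv
  have hsq : lam * u x ^ 2 = 0 := hzero ⟨hx0, hxL⟩
  simpa [hlam.ne'] using hsq
end

section
/- Let λ > 0, f ∈ C([0,L]), and let u be a C^5 solution on [0,L] of λu + D^3u − D^5u = f with boundary conditions u(0) = u(L) = D^2u(L) = 0, D^3u(0) = a_{31} Du(0), D^3u(L) = b_{31} Du(L), where a_{31} < 1/2 and b_{31} > 1/2. Then the L^2 norm of u on (0,L) is at most (1/λ) times the L^2 norm of f. -/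
theorem stmt_8 (L : ℝ) (hL : 0 < L) (lam : ℝ) (hlam : 0 < lam)
    (a31 b31 : ℝ) (ha : a31 < 1 / 2) (hb : 1 / 2 < b31)
    (u f : ℝ → ℝ) (hu : ContDiffOn ℝ 5 u (Set.Icc 0 L))
    (hf : ContinuousOn f (Set.Icc 0 L))
    (heq : ∀ x ∈ Set.Ioo (0:ℝ) L, lam * u x + D L u 3 x - D L u 5 x = f x)
    (h0 : u 0 = 0) (hLv : u L = 0) (h2L : D L u 2 L = 0)
    (h30 : D L u 3 0 = a31 * D L u 1 0) (h3L : D L u 3 L = b31 * D L u 1 L) :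
    Real.sqrt (∫ x in (0:ℝ)..L, (u x) ^ 2) ≤
      (1 / lam) * Real.sqrt (∫ x in (0:ℝ)..L, (f x) ^ 2) := by
  have hud : UniqueDiffOn ℝ (Set.Icc (0:ℝ) L) := uniqueDiffOn_Icc hL
  have hsub : Set.Ioo (0:ℝ) L ⊆ Set.Icc 0 L := Set.Ioo_subset_Icc_self
  have h0eq : ∀ x, D L u 0 x = u x := by
    intro x; simp [D]
  have hcont : ∀ i : ℕ, i ≤ 5 → ContinuousOn (D L u i) (Set.Icc 0 L) := by
    intro i hi
    exact hu.continuousOn_iteratedDerivWithin (by exact_mod_cast hi) hud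
  have hderiv : ∀ i : ℕ, i < 5 → ∀ x ∈ Set.Ioo (0:ℝ) L,
      HasDerivAt (D L u i) (D L u (i+1) x) x := by
    intro i hi x hx
    have hne : Set.Icc (0:ℝ) L ∈ nhds x := Icc_mem_nhds hx.1 hx.2
    have hd : DifferentiableOn ℝ (iteratedDerivWithin i u (Set.Icc 0 L)) (Set.Icc 0 L) :=
      hu.differentiableOn_iteratedDerivWithin (by exact_mod_cast hi) hud
    have h1 : HasDerivWithinAt (iteratedDerivWithin i u (Set.Icc 0 L))
        (derivWithin (iteratedDerivWithin i u (Set.Icc 0 L)) (Set.Icc 0 L) x)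
        (Set.Icc 0 L) x :=
      (hd x (hsub hx)).hasDerivWithinAt
    have h2 := h1.hasDerivAt hne
    have h3 : D L u (i+1) x = derivWithin (iteratedDerivWithin i u (Set.Icc 0 L))
        (Set.Icc 0 L) x := congrFun iteratedDerivWithin_succ x
    rw [show D L u i = iteratedDerivWithin i u (Set.Icc 0 L) from rfl, h3]
    exact h2
  have hint : ∀ i j : ℕ, i ≤ 5 → j ≤ 5 →
      IntervalIntegrable (fun x => D L u i x * D L u j x) MeasureTheory.volume 0 L := by
    intro i j hi hj
    apply ContinuousOn.intervalIntegrable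
    rw [Set.uIcc_of_le hL.le]
    exact (hcont i hi).mul (hcont j hj)
  have ibp : ∀ i j : ℕ, i < 5 → j < 5 →
      (∫ x in (0:ℝ)..L, D L u (i+1) x * D L u j x) +
      (∫ x in (0:ℝ)..L, D L u i x * D L u (j+1) x) =
        D L u i L * D L u j L - D L u i 0 * D L u j 0 := by
    intro i j hi hj
    have key := intervalIntegral.integral_eq_sub_of_hasDerivAt_of_le
      (f := fun x => D L u i x * D L u j x)
      (f' := fun x => D L u (i+1) x * D L u j x + D L u i x * D L u (j+1) x)
      hL.le
      ((hcont i hi.le).mul (hcont j hj.le))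
      (fun x hx => (hderiv i hi x hx).mul (hderiv j hj x hx))
      (by
        apply ContinuousOn.intervalIntegrable
        rw [Set.uIcc_of_le hL.le]
        exact ((hcont (i+1) (by omega)).mul (hcont j hj.le)).add
          ((hcont i hi.le).mul (hcont (j+1) (by omega))))
    rw [intervalIntegral.integral_add (hint (i+1) j (by omega) hj.le)
      (hint i (j+1) hi.le (by omega))] at key
    exact key
  have hA := ibp 2 0 (by norm_num) (by norm_num)
  have hB := ibp 1 1 (by norm_num) (by norm_num)
  have hC := ibp 4 0 (by norm_num) (by norm_num)
  have hD := ibp 3 1 (by norm_num) (by norm_num)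
  have hE := ibp 2 2 (by norm_num) (by norm_num)
  norm_num at hA hB hC hD hE
  have hcomm12 : (∫ x in (0:ℝ)..L, D L u 1 x * D L u 2 x) =
      ∫ x in (0:ℝ)..L, D L u 2 x * D L u 1 x := by
    congr 1; funext x; ring
  have hcomm23 : (∫ x in (0:ℝ)..L, D L u 2 x * D L u 3 x) =
      ∫ x in (0:ℝ)..L, D L u 3 x * D L u 2 x := by
    congr 1; funext x; ring
  rw [hcomm12] at hB
  rw [hcomm23] at hE
  simp only [h0eq, h0, hLv] at hA hC
  rw [h30, h3L] at hD
  rw [h2L] at hE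
  norm_num at hA hC hE
  -- main identity from the equation
  have hcu : ContinuousOn u (Set.Icc (0:ℝ) L) := hu.continuousOn
  have hintu2 : IntervalIntegrable (fun x => (u x)^2) MeasureTheory.volume 0 L := by
    apply ContinuousOn.intervalIntegrable
    rw [Set.uIcc_of_le hL.le]; exact hcu.pow 2
  have hintf2 : IntervalIntegrable (fun x => (f x)^2) MeasureTheory.volume 0 L := by
    apply ContinuousOn.intervalIntegrable
    rw [Set.uIcc_of_le hL.le]; exact hf.pow 2
  have hintfu : IntervalIntegrable (fun x => f x * u x) MeasureTheory.volume 0 L := by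
    apply ContinuousOn.intervalIntegrable
    rw [Set.uIcc_of_le hL.le]; exact hf.mul hcu
  have hint30 : IntervalIntegrable (fun x => D L u 3 x * u x) MeasureTheory.volume 0 L := by
    have := hint 3 0 (by norm_num) (by norm_num)
    simpa only [h0eq] using this
  have hint50 : IntervalIntegrable (fun x => D L u 5 x * u x) MeasureTheory.volume 0 L := by
    have := hint 5 0 (by norm_num) (by norm_num)
    simpa only [h0eq] using this
  have hA' : (∫ x in (0:ℝ)..L, D L u 3 x * u x) +
      (∫ x in (0:ℝ)..L, D L u 2 x * D L u 1 x) = 0 := hA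
  have hC' : (∫ x in (0:ℝ)..L, D L u 5 x * u x) +
      (∫ x in (0:ℝ)..L, D L u 4 x * D L u 1 x) = 0 := hC
  have hmain : lam * (∫ x in (0:ℝ)..L, (u x)^2) +
      (∫ x in (0:ℝ)..L, D L u 3 x * u x) - (∫ x in (0:ℝ)..L, D L u 5 x * u x) =
      ∫ x in (0:ℝ)..L, f x * u x := by
    have hae : ∀ᵐ x ∂(MeasureTheory.volume), x ∈ Set.uIoc (0:ℝ) L →
        (lam * (u x)^2 + D L u 3 x * u x - D L u 5 x * u x) = f x * u x := by
      filter_upwards [(Set.countable_singleton L).ae_notMem MeasureTheory.volume]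
        with x hxL hxI
      rw [Set.uIoc_of_le hL.le] at hxI
      have hxm : x ∈ Set.Ioo (0:ℝ) L :=
        ⟨hxI.1, lt_of_le_of_ne hxI.2 (fun h => hxL (by simp [h]))⟩
      have h' := heq x hxm
      linear_combination (u x) * h'
    have hcongr := intervalIntegral.integral_congr_ae hae
    rw [← hcongr]
    rw [intervalIntegral.integral_sub ((hintu2.const_mul lam).add hint30) hint50,
      intervalIntegral.integral_add (hintu2.const_mul lam) hint30,
      intervalIntegral.integral_const_mul]
  -- energy estimate
  have hposL : (0:ℝ) ≤ (b31 - 1/2) * (D L u 1 L)^2 :=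
    mul_nonneg (by linarith) (sq_nonneg _)
  have hpos0 : (0:ℝ) ≤ (1/2 - a31) * (D L u 1 0)^2 :=
    mul_nonneg (by linarith) (sq_nonneg _)
  have hpos2 : (0:ℝ) ≤ (D L u 2 0)^2 := sq_nonneg _
  have hkey : lam * (∫ x in (0:ℝ)..L, (u x)^2) ≤ ∫ x in (0:ℝ)..L, f x * u x := by
    nlinarith [hmain, hA', hB, hC', hD, hE, hposL, hpos0, hpos2]
  -- Cauchy-type bound
  have hcs : (∫ x in (0:ℝ)..L, f x * u x) ≤
      lam/2 * (∫ x in (0:ℝ)..L, (u x)^2) + 1/(2*lam) * (∫ x in (0:ℝ)..L, (f x)^2) := by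
    have hmono : (∫ x in (0:ℝ)..L, f x * u x) ≤
        ∫ x in (0:ℝ)..L, (lam/2 * (u x)^2 + 1/(2*lam) * (f x)^2) := by
      apply intervalIntegral.integral_mono_on hL.le hintfu
      · exact (hintu2.const_mul (lam/2)).add (hintf2.const_mul (1/(2*lam)))
      · intro x hx
        have h2 : (0:ℝ) < 2 * lam := by linarith
        rw [← sub_nonneg]
        have hexp : lam/2 * (u x)^2 + 1/(2*lam) * (f x)^2 - f x * u x
            = (lam * u x - f x)^2 / (2*lam) := by
          field_simp
          ring
        rw [hexp]
        positivity
    have hsplit : (∫ x in (0:ℝ)..L, (lam/2 * (u x)^2 + 1/(2*lam) * (f x)^2)) =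
        lam/2 * (∫ x in (0:ℝ)..L, (u x)^2) + 1/(2*lam) * (∫ x in (0:ℝ)..L, (f x)^2) := by
      rw [intervalIntegral.integral_add (hintu2.const_mul _) (hintf2.const_mul _),
        intervalIntegral.integral_const_mul, intervalIntegral.integral_const_mul]
    linarith [hmono, hsplit.le, hsplit.ge]
  have hfinal : (∫ x in (0:ℝ)..L, (u x)^2) ≤ (1/lam)^2 * (∫ x in (0:ℝ)..L, (f x)^2) := by
    have h1 : lam/2 * (∫ x in (0:ℝ)..L, (u x)^2) ≤
        1/(2*lam) * (∫ x in (0:ℝ)..L, (f x)^2) := by linarith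
    have hml := mul_le_mul_of_nonneg_left h1 (by positivity : (0:ℝ) ≤ 2/lam)
    calc (∫ x in (0:ℝ)..L, (u x)^2)
        = 2/lam * (lam/2 * (∫ x in (0:ℝ)..L, (u x)^2)) := by field_simp
      _ ≤ 2/lam * (1/(2*lam) * (∫ x in (0:ℝ)..L, (f x)^2)) := hml
      _ = (1/lam)^2 * (∫ x in (0:ℝ)..L, (f x)^2) := by field_simp
  calc Real.sqrt (∫ x in (0:ℝ)..L, (u x)^2)
      ≤ Real.sqrt ((1/lam)^2 * (∫ x in (0:ℝ)..L, (f x)^2)) := Real.sqrt_le_sqrt hfinal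
    _ = (1/lam) * Real.sqrt (∫ x in (0:ℝ)..L, (f x)^2) := by
        rw [Real.sqrt_mul (sq_nonneg _), Real.sqrt_sq (by positivity : (0:ℝ) ≤ 1/lam)]
end

section
/- For any C^3 function u on [0,L] with u(0) = u(L) = Du(L) = 0, one has ∫_0^L D^3u(x) · (1+x) · u(x) dx = (1/2)(Du(0))^2 + (3/2)∫_0^L (Du(x))^2 dx, and in particular ∫_0^L D^3u · (1+x) u dx ≥ (3/2) ∫_0^L (Du)^2 dx. -/
theorem stmt_12 (L : ℝ) (hL : 0 < L)
    (u : ℝ → ℝ) (hu : ContDiffOn ℝ 3 u (Set.Icc 0 L))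
    (h0 : u 0 = 0) (hLv : u L = 0) (h1L : D L u 1 L = 0) :
    (∫ x in (0:ℝ)..L, D L u 3 x * ((1 + x) * u x)) =
        (1 / 2) * (D L u 1 0) ^ 2 + (3 / 2) * ∫ x in (0:ℝ)..L, (D L u 1 x) ^ 2 ∧
      (∫ x in (0:ℝ)..L, D L u 3 x * ((1 + x) * u x)) ≥
        (3 / 2) * ∫ x in (0:ℝ)..L, (D L u 1 x) ^ 2 := by
  have hLle : (0:ℝ) ≤ L := hL.le
  have hUD : UniqueDiffOn ℝ (Set.Icc (0:ℝ) L) := uniqueDiffOn_Icc hL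
  set v := D L u 1 with hv
  set w := D L u 2 with hw
  set t := D L u 3 with ht
  have cu : ContinuousOn u (Set.Icc 0 L) := hu.continuousOn
  have cv : ContinuousOn v (Set.Icc 0 L) :=
    hu.continuousOn_iteratedDerivWithin (by norm_num) hUD
  have cw : ContinuousOn w (Set.Icc 0 L) :=
    hu.continuousOn_iteratedDerivWithin (by norm_num) hUD
  have ct : ContinuousOn t (Set.Icc 0 L) :=
    hu.continuousOn_iteratedDerivWithin (by norm_num) hUD
  have hmem : ∀ x ∈ Set.Ioo (0:ℝ) L, Set.Icc (0:ℝ) L ∈ nhds x :=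
    fun x hx => Icc_mem_nhds hx.1 hx.2
  have hdu : ∀ x ∈ Set.Ioo (0:ℝ) L, HasDerivAt u (v x) x := by
    intro x hx
    have hxI : x ∈ Set.Icc (0:ℝ) L := Set.Ioo_subset_Icc_self hx
    have hd := (hu.differentiableOn (by norm_num) x hxI).hasDerivWithinAt
    rw [hv]; simp only [D]
    rw [iteratedDerivWithin_one]
    exact hd.hasDerivAt (hmem x hx)
  have hdv : ∀ x ∈ Set.Ioo (0:ℝ) L, HasDerivAt v (w x) x := by
    intro x hx
    have hxI : x ∈ Set.Icc (0:ℝ) L := Set.Ioo_subset_Icc_self hx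
    have hd := (hu.differentiableOn_iteratedDerivWithin (m := 1) (by norm_num) hUD x
      hxI).hasDerivWithinAt
    have hwx : w x = derivWithin v (Set.Icc 0 L) x := congrFun iteratedDerivWithin_succ x
    rw [hwx]
    exact hd.hasDerivAt (hmem x hx)
  have hdw : ∀ x ∈ Set.Ioo (0:ℝ) L, HasDerivAt w (t x) x := by
    intro x hx
    have hxI : x ∈ Set.Icc (0:ℝ) L := Set.Ioo_subset_Icc_self hx
    have hd := (hu.differentiableOn_iteratedDerivWithin (m := 2) (by norm_num) hUD x
      hxI).hasDerivWithinAt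
    have htx : t x = derivWithin w (Set.Icc 0 L) x := congrFun iteratedDerivWithin_succ x
    rw [htx]
    exact hd.hasDerivAt (hmem x hx)
  have huIcc : Set.uIcc (0:ℝ) L = Set.Icc 0 L := Set.uIcc_of_le hLle
  have hone : ContinuousOn (fun x : ℝ => 1 + x) (Set.Icc (0:ℝ) L) :=
    (continuous_const.add continuous_id).continuousOn
  have hA : IntervalIntegrable (fun x => t x * ((1 + x) * u x)) MeasureTheory.volume 0 L := by
    apply ContinuousOn.intervalIntegrable; rw [huIcc]; exact ct.mul (hone.mul cu)
  have hB : IntervalIntegrable (fun x => w x * u x) MeasureTheory.volume 0 L := by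
    apply ContinuousOn.intervalIntegrable; rw [huIcc]; exact cw.mul cu
  have hC : IntervalIntegrable (fun x => (1 + x) * (w x * v x)) MeasureTheory.volume 0 L := by
    apply ContinuousOn.intervalIntegrable; rw [huIcc]; exact hone.mul (cw.mul cv)
  have hV : IntervalIntegrable (fun x => v x ^ 2) MeasureTheory.volume 0 L := by
    apply ContinuousOn.intervalIntegrable; rw [huIcc]; exact cv.pow 2
  -- I1
  have I1 : (∫ x in (0:ℝ)..L,
      (t x * ((1 + x) * u x) + (w x * u x + (1 + x) * (w x * v x)))) = 0 := by
    have := intervalIntegral.integral_eq_sub_of_hasDeriv_right_of_le hLle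
      (f := fun x => w x * ((1 + x) * u x))
      (f' := fun x => t x * ((1 + x) * u x) + (w x * u x + (1 + x) * (w x * v x)))
      (cw.mul (hone.mul cu))
      (by
        intro x hx
        have hid : HasDerivAt (fun y : ℝ => 1 + y) 1 x := by
          simpa using (hasDerivAt_id x).const_add 1
        have hg : HasDerivAt (fun y => (1 + y) * u y) (1 * u x + (1 + x) * v x) x :=
          hid.mul (hdu x hx)
        have hF := (hdw x hx).mul hg
        convert hF.hasDerivWithinAt using 1
        swap
        ring
        rfl)
      (hA.add (hB.add hC))
    rw [this]; simp [hLv, h0]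
  have I2 : (∫ x in (0:ℝ)..L, (w x * u x + v x ^ 2)) = 0 := by
    have := intervalIntegral.integral_eq_sub_of_hasDeriv_right_of_le hLle
      (f := fun x => v x * u x)
      (f' := fun x => w x * u x + v x ^ 2)
      (cv.mul cu)
      (by
        intro x hx
        have hF := (hdv x hx).mul (hdu x hx)
        convert hF.hasDerivWithinAt using 1
        swap
        ring
        rfl)
      (hB.add hV)
    rw [this]; simp [hLv, h0]
  have I3 : (∫ x in (0:ℝ)..L, (v x ^ 2 + 2 * ((1 + x) * (w x * v x)))) = -(v 0) ^ 2 := by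
    have := intervalIntegral.integral_eq_sub_of_hasDeriv_right_of_le hLle
      (f := fun x => (1 + x) * v x ^ 2)
      (f' := fun x => v x ^ 2 + 2 * ((1 + x) * (w x * v x)))
      (hone.mul (cv.pow 2))
      (by
        intro x hx
        have hid : HasDerivAt (fun y : ℝ => 1 + y) 1 x := by
          simpa using (hasDerivAt_id x).const_add 1
        have hF := hid.mul ((hdv x hx).pow 2)
        convert hF.hasDerivWithinAt using 1
        swap
        simp only [Pi.pow_apply]
        push_cast
        ring
        rfl)
      (hV.add ((hC.const_mul 2)))
    rw [this]
    have hvL : v L = 0 := h1L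
    simp [hvL]
  rw [intervalIntegral.integral_add hA (hB.add hC)] at I1
  rw [intervalIntegral.integral_add hB hC] at I1
  rw [intervalIntegral.integral_add hB hV] at I2
  rw [intervalIntegral.integral_add hV (hC.const_mul 2)] at I3
  rw [intervalIntegral.integral_const_mul] at I3
  constructor
  · linarith
  · nlinarith [sq_nonneg (v 0)]
end

section
/- Let λ > 0 and let u be a C^7 function on [0,L] satisfying λu + D^3u − D^5u + D^7u = 0 on (0,L) with the boundary conditions u(0) = u(L) = D^3u(L) = 0, D^4u(0) = a_{42} D^2u(0), D^5u(0) = a_{51} Du(0), D^4u(L) = b_{42} D^2u(L), D^5u(L) = b_{51} Du(L), where b_{51} < −1/2, b_{42} > 1/2, a_{51} > 1/2, a_{42} < 1/2. Then u ≡ 0 on [0,L]. -/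
set_option maxHeartbeats 1000000


theorem stmt_14 (L : ℝ) (hL : 0 < L) (lam : ℝ) (hlam : 0 < lam)
    (a42 a51 b42 b51 : ℝ)
    (ha42 : a42 < 1 / 2) (ha51 : 1 / 2 < a51) (hb42 : 1 / 2 < b42) (hb51 : b51 < -(1 / 2))
    (u : ℝ → ℝ) (hu : ContDiffOn ℝ 7 u (Set.Icc 0 L))
    (heq : ∀ x ∈ Set.Ioo (0:ℝ) L, lam * u x + D L u 3 x - D L u 5 x + D L u 7 x = 0)
    (h0 : u 0 = 0) (hLv : u L = 0) (h3L : D L u 3 L = 0)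
    (h40 : D L u 4 0 = a42 * D L u 2 0) (h50 : D L u 5 0 = a51 * D L u 1 0)
    (h4L : D L u 4 L = b42 * D L u 2 L) (h5L : D L u 5 L = b51 * D L u 1 L) :
    ∀ x ∈ Set.Icc (0:ℝ) L, u x = 0 := by
  have hs : UniqueDiffOn ℝ (Set.Icc (0:ℝ) L) := uniqueDiffOn_Icc hL
  have hle : (0:ℝ) ≤ L := hL.le
  have hD0 : ∀ x, D L u 0 x = u x := fun x => by
    simp [D, iteratedDerivWithin_zero]
  -- derivative of each D i
  have hder : ∀ i : ℕ, i < 7 → ∀ x ∈ Set.Ioo (0:ℝ) L,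
      HasDerivAt (D L u i) (D L u (i+1) x) x := by
    intro i hi x hx
    have hxI : x ∈ Set.Icc (0:ℝ) L := Set.mem_Icc_of_Ioo hx
    have hdiff : DifferentiableOn ℝ (iteratedDerivWithin i u (Set.Icc 0 L)) (Set.Icc 0 L) :=
      hu.differentiableOn_iteratedDerivWithin (by exact_mod_cast hi) hs
    have h1 : HasDerivWithinAt (D L u i)
        (derivWithin (iteratedDerivWithin i u (Set.Icc 0 L)) (Set.Icc 0 L) x)
        (Set.Icc 0 L) x := (hdiff x hxI).hasDerivWithinAt
    have h2 : D L u (i+1) x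
        = derivWithin (iteratedDerivWithin i u (Set.Icc 0 L)) (Set.Icc 0 L) x :=
      congrFun iteratedDerivWithin_succ x
    rw [h2]
    exact h1.hasDerivAt (Icc_mem_nhds hx.1 hx.2)
  have hcont : ∀ i : ℕ, i ≤ 7 → ContinuousOn (D L u i) (Set.Icc (0:ℝ) L) := by
    intro i hi
    exact hu.continuousOn_iteratedDerivWithin (by exact_mod_cast hi) hs
  set G : ℝ → ℝ := fun x =>
    D L u 0 x * D L u 2 x - D L u 1 x ^ 2 / 2 - D L u 0 x * D L u 4 x
      + D L u 1 x * D L u 3 x - D L u 2 x ^ 2 / 2 + D L u 0 x * D L u 6 x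
      - D L u 1 x * D L u 5 x + D L u 2 x * D L u 4 x - D L u 3 x ^ 2 / 2 with hGdef
  have hGd : ∀ x ∈ Set.Ioo (0:ℝ) L, HasDerivAt G (-(lam * u x ^ 2)) x := by
    intro x hx
    have d0 := hder 0 (by norm_num) x hx
    have d1 := hder 1 (by norm_num) x hx
    have d2 := hder 2 (by norm_num) x hx
    have d3 := hder 3 (by norm_num) x hx
    have d4 := hder 4 (by norm_num) x hx
    have d5 := hder 5 (by norm_num) x hx
    have d6 := hder 6 (by norm_num) x hx
    have h := ((((((((d0.mul d2).sub ((d1.pow 2).div_const 2)).sub (d0.mul d4)).add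
      (d1.mul d3)).sub ((d2.pow 2).div_const 2)).add (d0.mul d6)).sub
      (d1.mul d5)).add (d2.mul d4)).sub ((d3.pow 2).div_const 2)
    convert h using 1
    case e'_4 => rfl
    case e'_5 => rfl
    case e'_8 => rfl
    have he := heq x hx
    have h0x := hD0 x
    rw [h0x]
    push_cast
    linear_combination (-(u x)) * he
  have hGcont : ContinuousOn G (Set.Icc (0:ℝ) L) := by
    have c0 := hcont 0 (by norm_num)
    have c1 := hcont 1 (by norm_num)
    have c2 := hcont 2 (by norm_num)
    have c3 := hcont 3 (by norm_num)
    have c4 := hcont 4 (by norm_num)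
    have c5 := hcont 5 (by norm_num)
    have c6 := hcont 6 (by norm_num)
    exact ((((((((c0.mul c2).sub ((c1.pow 2).div_const 2)).sub (c0.mul c4)).add
      (c1.mul c3)).sub ((c2.pow 2).div_const 2)).add (c0.mul c6)).sub
      (c1.mul c5)).add (c2.mul c4)).sub ((c3.pow 2).div_const 2)
  have hcontu : ContinuousOn u (Set.Icc (0:ℝ) L) := hu.continuousOn
  have hint : IntervalIntegrable (fun x => -(lam * u x ^ 2)) MeasureTheory.volume 0 L := by
    apply ContinuousOn.intervalIntegrable
    rw [Set.uIcc_of_le hle]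
    exact (continuousOn_const.mul (hcontu.pow 2)).neg
  have hFTC := intervalIntegral.integral_eq_sub_of_hasDerivAt_of_le hle hGcont hGd hint
  have hI : lam * ∫ x in (0:ℝ)..L, u x ^ 2 = G 0 - G L := by
    rw [intervalIntegral.integral_neg, intervalIntegral.integral_const_mul] at hFTC
    linarith
  have hG0 : G 0 = -(D L u 1 0) ^ 2 / 2 + D L u 1 0 * D L u 3 0 - (D L u 2 0) ^ 2 / 2
      - a51 * D L u 1 0 ^ 2 + a42 * D L u 2 0 ^ 2 - D L u 3 0 ^ 2 / 2 := by
    rw [hGdef]; simp only [hD0, h0, h40, h50]; ring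
  have hGL : G L = -(D L u 1 L) ^ 2 / 2 - (D L u 2 L) ^ 2 / 2
      - b51 * D L u 1 L ^ 2 + b42 * D L u 2 L ^ 2 := by
    rw [hGdef]; simp only [hD0, hLv, h3L, h4L, h5L]; ring
  have hQle : G 0 - G L ≤ 0 := by
    rw [hG0, hGL]
    nlinarith [sq_nonneg (D L u 1 0 - D L u 3 0), sq_nonneg (D L u 1 0),
      sq_nonneg (D L u 2 0), sq_nonneg (D L u 1 L), sq_nonneg (D L u 2 L),
      sq_nonneg (D L u 3 0)]
  have hInn : 0 ≤ ∫ x in (0:ℝ)..L, u x ^ 2 :=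
    intervalIntegral.integral_nonneg hle (fun x _ => sq_nonneg _)
  have hIzero : ∫ x in (0:ℝ)..L, u x ^ 2 = 0 := by
    by_contra hne
    have hpos : 0 < ∫ x in (0:ℝ)..L, u x ^ 2 := lt_of_le_of_ne hInn (Ne.symm hne)
    linarith [mul_pos hlam hpos]
  have hint2 : IntervalIntegrable (fun x => u x ^ 2) MeasureTheory.volume 0 L := by
    apply ContinuousOn.intervalIntegrable
    rw [Set.uIcc_of_le hle]
    exact hcontu.pow 2
  have hae : (fun x => u x ^ 2) =ᵐ[MeasureTheory.volume.restrict (Set.Ioc 0 L)] 0 := by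
    rw [← intervalIntegral.integral_eq_zero_iff_of_le_of_nonneg_ae hle
      (Filter.Eventually.of_forall fun x => sq_nonneg _) hint2]
    exact hIzero
  have heqOn : Set.EqOn (fun x => u x ^ 2) 0 (Set.Ioc 0 L) :=
    MeasureTheory.Measure.eqOn_Ioc_of_ae_eq (μ := MeasureTheory.volume) hae
      ((hcontu.mono Set.Ioc_subset_Icc_self).pow 2) continuousOn_const
  intro x hx
  rcases eq_or_lt_of_le hx.1 with h | h
  · rw [← h]; exact h0
  · have := heqOn ⟨h, hx.2⟩
    simpa using pow_eq_zero_iff (n := 2) (by norm_num) |>.mp this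
end

section
/- Let λ > 0, f continuous on [0,L], and let u be a C^5 solution on [0,L] of λu + D^3u − D^5u = f with boundary conditions u(0) = u(L) = D^2u(L) = 0, D^3u(0) = a_{31} Du(0), D^3u(L) = b_{31} Du(L), where a_{31} < 1/2 and b_{31} > 1/2. Set M_1 = min{b_{31} − 1/2, 1/2 − a_{31}, 1/4}. Then (Du(L))^2 + (Du(0))^2 + (D^2u(0))^2 ≤ (1/(λ M_1)) ∫_0^L f(x)^2 dx. -/
theorem stmt_17 (L : ℝ) (hL : 0 < L) (lam : ℝ) (hlam : 0 < lam)
    (a31 b31 : ℝ) (ha : a31 < 1 / 2) (hb : 1 / 2 < b31)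
    (u f : ℝ → ℝ) (hu : ContDiffOn ℝ 5 u (Set.Icc 0 L))
    (hf : ContinuousOn f (Set.Icc 0 L))
    (heq : ∀ x ∈ Set.Ioo (0:ℝ) L, lam * u x + D L u 3 x - D L u 5 x = f x)
    (h0 : u 0 = 0) (hLv : u L = 0) (h2L : D L u 2 L = 0)
    (h30 : D L u 3 0 = a31 * D L u 1 0) (h3L : D L u 3 L = b31 * D L u 1 L)
    (M1 : ℝ) (hM1 : M1 = min (b31 - 1 / 2) (min (1 / 2 - a31) (1 / 4))) :
    (D L u 1 L) ^ 2 + (D L u 1 0) ^ 2 + (D L u 2 0) ^ 2 ≤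
      (1 / (lam * M1)) * ∫ x in (0:ℝ)..L, (f x) ^ 2 := by
  set s : Set ℝ := Set.Icc 0 L with hs
  have hsu : UniqueDiffOn ℝ s := uniqueDiffOn_Icc hL
  set v : ℕ → ℝ → ℝ := D L u with hv
  have hv0 : v 0 = u := by funext x; simp [hv, D, iteratedDerivWithin_zero]
  -- continuity of derivatives
  have hcont : ∀ i : ℕ, i ≤ 5 → ContinuousOn (v i) s := fun i hi =>
    hu.continuousOn_iteratedDerivWithin (by exact_mod_cast hi) hsu
  -- derivatives within
  have hder : ∀ i : ℕ, i < 5 → ∀ x ∈ s, HasDerivWithinAt (v i) (v (i+1) x) s x := by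
    intro i hi x hx
    have hd : DifferentiableWithinAt ℝ (v i) s x :=
      (hu.differentiableOn_iteratedDerivWithin (by exact_mod_cast hi) hsu) x hx
    have := hd.hasDerivWithinAt
    rwa [show derivWithin (v i) s x = v (i+1) x from
      (congrFun (iteratedDerivWithin_succ (n := i) (f := u) (s := s)) x).symm] at this
  -- the combined function G
  set G : ℝ → ℝ := fun x => u x * v 2 x - v 1 x * v 1 x / 2 - u x * v 4 x
      + v 1 x * v 3 x - v 2 x * v 2 x / 2 with hG
  have hGder : ∀ x ∈ Set.Ioo (0:ℝ) L,
      HasDerivWithinAt G (u x * v 3 x - u x * v 5 x) (Set.Ioi x) x := by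
    intro x hx
    have hxs : x ∈ s := Set.Ioo_subset_Icc_self hx
    have hmem : s ∈ nhds x := Icc_mem_nhds hx.1 hx.2
    have H : ∀ i, i < 5 → HasDerivAt (v i) (v (i+1) x) x :=
      fun i hi => (hder i hi x hxs).hasDerivAt hmem
    have Hu : HasDerivAt u (v 1 x) x := by
      have := H 0 (by norm_num); rwa [hv0] at this
    have : HasDerivAt G (u x * v 3 x - u x * v 5 x) x := by
      have h1 : HasDerivAt (v 1) (v 2 x) x := H 1 (by norm_num)
      have h2 : HasDerivAt (v 2) (v 3 x) x := H 2 (by norm_num)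
      have h3 : HasDerivAt (v 3) (v 4 x) x := H 3 (by norm_num)
      have h4 : HasDerivAt (v 4) (v 5 x) x := H 4 (by norm_num)
      have := (((((Hu.mul h2).sub ((h1.mul h1).div_const 2)).sub
        (Hu.mul h4)).add (h1.mul h3)).sub ((h2.mul h2).div_const 2))
      convert this using 1
      · rfl
      · rfl
      · rfl
      · ring
    exact this.hasDerivWithinAt
  have hGcont : ContinuousOn G s := by
    have hucont : ContinuousOn u s := hu.continuousOn
    exact ((((hucont.mul (hcont 2 (by norm_num))).sub
      (((hcont 1 (by norm_num)).mul (hcont 1 (by norm_num))).div_const 2)).sub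
      (hucont.mul (hcont 4 (by norm_num)))).add
      ((hcont 1 (by norm_num)).mul (hcont 3 (by norm_num)))).sub
      (((hcont 2 (by norm_num)).mul (hcont 2 (by norm_num))).div_const 2)
  have hucont : ContinuousOn u s := hu.continuousOn
  -- integrability facts
  have hint : IntervalIntegrable (fun x => u x * v 3 x - u x * v 5 x) MeasureTheory.volume 0 L := by
    apply ContinuousOn.intervalIntegrable
    rw [Set.uIcc_of_le hL.le]
    exact (hucont.mul (hcont 3 (by norm_num))).sub (hucont.mul (hcont 5 (by norm_num)))
  -- FTC
  have hFTC : ∫ x in (0:ℝ)..L, (u x * v 3 x - u x * v 5 x) = G L - G 0 :=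
    intervalIntegral.integral_eq_sub_of_hasDeriv_right_of_le hL.le hGcont hGder hint
  -- boundary values
  have hGL : G L = (b31 - 1/2) * (v 1 L)^2 := by
    simp only [hG]; rw [hLv, h2L, h3L]; ring
  have hG0 : G 0 = (a31 - 1/2) * (v 1 0)^2 - (v 2 0)^2 / 2 := by
    simp only [hG]; rw [h0, h30]; ring
  -- rewrite the PDE as an a.e. identity on the interval
  have haeL : ∀ᵐ x : ℝ, x ≠ L := by
    have : MeasureTheory.volume ({L} : Set ℝ) = 0 := Real.volume_singleton
    simpa [Set.mem_singleton_iff] using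
      (MeasureTheory.measure_eq_zero_iff_ae_notMem).mp this
  have hfuint : IntervalIntegrable (fun x => f x * u x) MeasureTheory.volume 0 L := by
    apply ContinuousOn.intervalIntegrable; rw [Set.uIcc_of_le hL.le]; exact hf.mul hucont
  have hu2int : IntervalIntegrable (fun x => (u x)^2) MeasureTheory.volume 0 L := by
    apply ContinuousOn.intervalIntegrable; rw [Set.uIcc_of_le hL.le]; exact hucont.pow 2
  have hf2int : IntervalIntegrable (fun x => (f x)^2) MeasureTheory.volume 0 L := by
    apply ContinuousOn.intervalIntegrable; rw [Set.uIcc_of_le hL.le]; exact hf.pow 2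
  have key : ∫ x in (0:ℝ)..L, (lam * (u x)^2 + (u x * v 3 x - u x * v 5 x))
      = ∫ x in (0:ℝ)..L, f x * u x := by
    apply intervalIntegral.integral_congr_ae
    filter_upwards [haeL] with x hxL hx
    rw [Set.uIoc_of_le hL.le] at hx
    have hxo : x ∈ Set.Ioo 0 L := ⟨hx.1, lt_of_le_of_ne hx.2 hxL⟩
    have h := heq x hxo
    rw [← h]; ring
  have hsplit : ∫ x in (0:ℝ)..L, (lam * (u x)^2 + (u x * v 3 x - u x * v 5 x))
      = lam * (∫ x in (0:ℝ)..L, (u x)^2) + (G L - G 0) := by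
    rw [intervalIntegral.integral_add (hu2int.const_mul lam) hint,
      intervalIntegral.integral_const_mul, hFTC]
  -- Young's inequality pointwise, integrated
  have hY : ∫ x in (0:ℝ)..L, f x * u x
      ≤ ∫ x in (0:ℝ)..L, ((1/(2*lam)) * (f x)^2 + (lam/2) * (u x)^2) := by
    apply intervalIntegral.integral_mono_on hL.le hfuint
      ((hf2int.const_mul _).add (hu2int.const_mul _))
    intro x hx
    rw [← sub_nonneg]
    have h3 : (1:ℝ)/(2*lam) * (f x)^2 + lam/2 * (u x)^2 - f x * u x
        = (f x - lam * u x)^2 / (2*lam) := by field_simp; ring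
    rw [h3]; positivity
  have hYint : ∫ x in (0:ℝ)..L, ((1/(2*lam)) * (f x)^2 + (lam/2) * (u x)^2)
      = (1/(2*lam)) * (∫ x in (0:ℝ)..L, (f x)^2)
        + (lam/2) * (∫ x in (0:ℝ)..L, (u x)^2) := by
    rw [intervalIntegral.integral_add (hf2int.const_mul _) (hu2int.const_mul _),
      intervalIntegral.integral_const_mul, intervalIntegral.integral_const_mul]
  set E := ∫ x in (0:ℝ)..L, (u x)^2 with hE
  set I := ∫ x in (0:ℝ)..L, (f x)^2 with hI
  have hEnn : 0 ≤ E := intervalIntegral.integral_nonneg hL.le (fun x _ => sq_nonneg _)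
  have hInn : 0 ≤ I := intervalIntegral.integral_nonneg hL.le (fun x _ => sq_nonneg _)
  have hmain : lam * E + (G L - G 0) ≤ (1/(2*lam)) * I + (lam/2) * E := by
    rw [← hsplit, ← hYint]; exact le_of_le_of_eq (le_of_eq key) rfl |>.trans hY
  set A := (v 1 L)^2 with hA
  set B := (v 1 0)^2 with hB
  set C := (v 2 0)^2 with hC
  have hGdiff : G L - G 0 = (b31 - 1/2) * A + (1/2 - a31) * B + C / 2 := by
    rw [hGL, hG0]; ring
  have hM1b : M1 ≤ b31 - 1/2 := hM1 ▸ min_le_left _ _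
  have hM1a : M1 ≤ 1/2 - a31 := hM1 ▸ le_trans (min_le_right _ _) (min_le_left _ _)
  have hM14 : M1 ≤ 1/4 := hM1 ▸ le_trans (min_le_right _ _) (min_le_right _ _)
  have hM1pos : 0 < M1 := by
    rw [hM1]; apply lt_min (by linarith) (lt_min (by linarith) (by norm_num))
  have hAnn : 0 ≤ A := sq_nonneg _
  have hBnn : 0 ≤ B := sq_nonneg _
  have hCnn : 0 ≤ C := sq_nonneg _
  have hsum : (b31 - 1/2) * A + (1/2 - a31) * B + C / 2 ≤ (1/(2*lam)) * I := by
    have hmain2 := hmain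
    rw [hGdiff] at hmain2
    have hlE : 0 ≤ lam * E := mul_nonneg hlam.le hEnn
    linarith
  have hstep : M1 * (A + B + C) ≤ (1/(2*lam)) * I := by
    have h4 : M1 ≤ 1/2 := by linarith
    have t1 := mul_le_mul_of_nonneg_right hM1b hAnn
    have t2 := mul_le_mul_of_nonneg_right hM1a hBnn
    have t3 := mul_le_mul_of_nonneg_right h4 hCnn
    linarith
  have hpos : (0:ℝ) < lam * M1 := mul_pos hlam hM1pos
  rw [one_div_mul_eq_div, le_div_iff₀ hpos]
  have hmul := mul_le_mul_of_nonneg_left hstep hlam.le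
  have heqq : lam * ((1/(2*lam)) * I) = I / 2 := by field_simp
  linarith [hmul, heqq.le, heqq.ge, hInn]
end

section
/- Let λ > 0 and suppose two C^5 functions u, v on [0,L] both solve λw + D^3w − D^5w = f on (0,L) with boundary conditions w(0) = w(L) = D^2w(L) = 0, D^3w(0) = a_{31} Dw(0), D^3w(L) = b_{31} Dw(L), where a_{31} < 1/2 and b_{31} > 1/2. Then u = v on [0,L]. -/
open MeasureTheory Set

lemma aux_zero {L : ℝ} (hL : 0 < L) {g : ℝ → ℝ} (hg : ContinuousOn g (Set.Icc 0 L))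
    (h : g =ᵐ[volume.restrict (Set.Ioc 0 L)] 0) :
    ∀ x ∈ Set.Icc 0 L, g x = 0 := by
  intro x hx
  by_contra hne
  obtain ⟨ε, hε, hball⟩ := Metric.continuousWithinAt_iff.mp (hg x hx) |g x| (abs_pos.mpr hne)
  set c := max 0 (x - ε/2) with hc
  set d := min L (x + ε/2) with hd
  have hx0 : (0:ℝ) ≤ x := hx.1
  have hxL : x ≤ L := hx.2
  have hcd : c < d := by
    rcases le_total 0 (x - ε/2) with h1 | h1 <;> rcases le_total L (x + ε/2) with h2 | h2 <;>
      simp [hc, hd, max_eq_left, max_eq_right, min_eq_left, min_eq_right, h1, h2] <;>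
      first
        | (constructor <;> linarith)
        | linarith
  have hsub : Set.Ioo c d ⊆ {y | g y ≠ 0} ∩ Set.Ioc 0 L := by
    intro y hy
    have hy1 : 0 < y := lt_of_le_of_lt (le_max_left _ _) hy.1
    have hy2 : y ≤ L := le_of_lt (lt_of_lt_of_le hy.2 (min_le_left _ _))
    have hdist : dist y x < ε := by
      rw [Real.dist_eq, abs_lt]
      constructor
      · have := lt_of_le_of_lt (le_max_right (0:ℝ) (x - ε/2)) hy.1
        linarith
      · have := lt_of_lt_of_le hy.2 (min_le_right L (x + ε/2))
        linarith
    have := hball ⟨hy1.le, hy2⟩ hdist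
    refine ⟨fun h0 => ?_, hy1, hy2⟩
    rw [Real.dist_eq, h0, zero_sub, abs_neg] at this
    exact lt_irrefl _ this
  have hnull : volume ({y | g y ≠ 0} ∩ Set.Ioc 0 L) = 0 := by
    have h2 : ∀ᵐ y ∂(volume.restrict (Set.Ioc 0 L)), g y = 0 := by
      filter_upwards [h] with y hy using hy
    have h' : (volume.restrict (Set.Ioc 0 L)) {y | ¬ g y = 0} = 0 := ae_iff.mp h2
    rwa [Measure.restrict_apply' measurableSet_Ioc] at h'
  have hle := measure_mono (μ := volume) hsub
  have hnull' : volume (Set.Ioo c d) = 0 := le_antisymm (hnull ▸ hle) zero_le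
  rw [Real.volume_Ioo] at hnull'
  rw [ENNReal.ofReal_eq_zero] at hnull'
  linarith

theorem stmt_18 (L : ℝ) (hL : 0 < L) (lam : ℝ) (hlam : 0 < lam)
    (a31 b31 : ℝ) (ha : a31 < 1 / 2) (hb : 1 / 2 < b31)
    (f : ℝ → ℝ) (hf : ContinuousOn f (Set.Icc 0 L))
    (u v : ℝ → ℝ)
    (hu : ContDiffOn ℝ 5 u (Set.Icc 0 L)) (hv : ContDiffOn ℝ 5 v (Set.Icc 0 L))
    (hequ : ∀ x ∈ Set.Ioo (0:ℝ) L, lam * u x + D L u 3 x - D L u 5 x = f x)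
    (heqv : ∀ x ∈ Set.Ioo (0:ℝ) L, lam * v x + D L v 3 x - D L v 5 x = f x)
    (hu0 : u 0 = 0) (huL : u L = 0) (hu2L : D L u 2 L = 0)
    (hu30 : D L u 3 0 = a31 * D L u 1 0) (hu3L : D L u 3 L = b31 * D L u 1 L)
    (hv0 : v 0 = 0) (hvL : v L = 0) (hv2L : D L v 2 L = 0)
    (hv30 : D L v 3 0 = a31 * D L v 1 0) (hv3L : D L v 3 L = b31 * D L v 1 L) :
    ∀ x ∈ Set.Icc (0:ℝ) L, u x = v x := by
  have hdiff : UniqueDiffOn ℝ (Set.Icc (0:ℝ) L) := uniqueDiffOn_Icc hL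
  set w : ℝ → ℝ := u - v with hw
  have hwc : ContDiffOn ℝ 5 w (Set.Icc 0 L) := hu.sub hv
  -- D of w is D u - D v
  have hD : ∀ i : ℕ, i ≤ 5 → ∀ x ∈ Set.Icc (0:ℝ) L, D L w i x = D L u i x - D L v i x := by
    intro i hi x hx
    exact iteratedDerivWithin_sub hx hdiff ((hu.contDiffWithinAt hx).of_le (by exact_mod_cast hi))
      ((hv.contDiffWithinAt hx).of_le (by exact_mod_cast hi))
  -- continuity of iterated derivatives of w
  have hcont : ∀ i : ℕ, i ≤ 5 → ContinuousOn (D L w i) (Set.Icc 0 L) := by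
    intro i hi
    exact hwc.continuousOn_iteratedDerivWithin (by exact_mod_cast hi) hdiff
  -- derivatives of iterated derivatives at interior points
  have hder : ∀ i : ℕ, i ≤ 4 → ∀ x ∈ Set.Ioo (0:ℝ) L,
      HasDerivAt (D L w i) (D L w (i+1) x) x := by
    intro i hi x hx
    have hxI : x ∈ Set.Icc (0:ℝ) L := Set.Ioo_subset_Icc_self hx
    have hdo : DifferentiableOn ℝ (iteratedDerivWithin i w (Set.Icc 0 L)) (Set.Icc 0 L) := by
      apply hwc.differentiableOn_iteratedDerivWithin _ hdiff
      exact_mod_cast Nat.lt_succ_of_le hi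
    have h1 := (hdo x hxI).hasDerivWithinAt
    have h2 : derivWithin (iteratedDerivWithin i w (Set.Icc 0 L)) (Set.Icc 0 L) x
        = D L w (i+1) x := (congrFun iteratedDerivWithin_succ x).symm
    rw [h2] at h1
    exact h1.hasDerivAt (Icc_mem_nhds hx.1 hx.2)
  have hD0 : ∀ x, D L w 0 x = w x := by
    intro x
    show iteratedDerivWithin 0 w (Set.Icc 0 L) x = w x
    rw [iteratedDerivWithin_zero]
  -- energy function
  set G : ℝ → ℝ := fun x => w x * (D L w 4 x - D L w 2 x) - D L w 1 x * D L w 3 x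
      + D L w 2 x * D L w 2 x / 2 + D L w 1 x * D L w 1 x / 2 with hG
  have hGcont : ContinuousOn G (Set.Icc 0 L) := by
    have h0 : ContinuousOn w (Set.Icc 0 L) := hwc.continuousOn
    have h1 := hcont 1 (by norm_num)
    have h2 := hcont 2 (by norm_num)
    have h3 := hcont 3 (by norm_num)
    have h4 := hcont 4 (by norm_num)
    exact (((h0.mul (h4.sub h2)).sub (h1.mul h3)).add ((h2.mul h2).div_const 2)).add
      ((h1.mul h1).div_const 2)
  -- the ODE for w
  have hode : ∀ x ∈ Set.Ioo (0:ℝ) L, D L w 5 x - D L w 3 x = lam * w x := by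
    intro x hx
    have hxI : x ∈ Set.Icc (0:ℝ) L := Set.Ioo_subset_Icc_self hx
    have e1 := hequ x hx
    have e2 := heqv x hx
    have d3 := hD 3 (by norm_num) x hxI
    have d5 := hD 5 (by norm_num) x hxI
    have hwx : w x = u x - v x := rfl
    rw [hwx, d3, d5]; linarith
  -- derivative of G
  have hGder : ∀ x ∈ Set.Ioo (0:ℝ) L, HasDerivAt G (lam * w x * w x) x := by
    intro x hx
    have h0 : HasDerivAt w (D L w 1 x) x := by
      have := hder 0 (by norm_num) x hx
      have heq : D L w 0 = w := funext hD0
      rwa [heq] at this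
    have h1 := hder 1 (by norm_num) x hx
    have h2 := hder 2 (by norm_num) x hx
    have h3 := hder 3 (by norm_num) x hx
    have h4 := hder 4 (by norm_num) x hx
    have hd : HasDerivAt G
        (D L w 1 x * (D L w 4 x - D L w 2 x) + w x * (D L w 5 x - D L w 3 x)
          - (D L w 2 x * D L w 3 x + D L w 1 x * D L w 4 x)
          + (D L w 3 x * D L w 2 x + D L w 2 x * D L w 3 x) / 2
          + (D L w 2 x * D L w 1 x + D L w 1 x * D L w 2 x) / 2) x :=
      (((h0.mul (h4.sub h2)).sub (h1.mul h3)).add ((h2.mul h2).div_const 2)).add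
        ((h1.mul h1).div_const 2)
    have := hode x hx
    convert hd using 1
    rw [this]; ring
  -- FTC
  have hint : IntervalIntegrable (fun x => lam * w x * w x) MeasureTheory.volume 0 L := by
    apply ContinuousOn.intervalIntegrable
    rw [Set.uIcc_of_le hL.le]
    exact (continuousOn_const.mul hwc.continuousOn).mul hwc.continuousOn
  have hftc : ∫ x in (0:ℝ)..L, lam * w x * w x = G L - G 0 :=
    intervalIntegral.integral_eq_sub_of_hasDerivAt_of_le hL.le hGcont hGder hint
  -- boundary values
  have h0I : (0:ℝ) ∈ Set.Icc (0:ℝ) L := by constructor <;> [rfl; exact hL.le]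
  have hLI : L ∈ Set.Icc (0:ℝ) L := by constructor <;> [exact hL.le; rfl]
  have hw0 : w 0 = 0 := by simp [hw, hu0, hv0]
  have hwL : w L = 0 := by simp [hw, huL, hvL]
  have hw2L : D L w 2 L = 0 := by rw [hD 2 (by norm_num) L hLI, hu2L, hv2L]; ring
  have hw30 : D L w 3 0 = a31 * D L w 1 0 := by
    rw [hD 3 (by norm_num) 0 h0I, hD 1 (by norm_num) 0 h0I, hu30, hv30]; ring
  have hw3L : D L w 3 L = b31 * D L w 1 L := by
    rw [hD 3 (by norm_num) L hLI, hD 1 (by norm_num) L hLI, hu3L, hv3L]; ring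
  have hGL : G L - G 0 ≤ 0 := by
    have : G L = (1/2 - b31) * (D L w 1 L * D L w 1 L) := by
      rw [hG]; simp only [hwL, hw2L, hw3L]; ring
    have hG0 : G 0 = (1/2 - a31) * (D L w 1 0 * D L w 1 0) + D L w 2 0 * D L w 2 0 / 2 := by
      rw [hG]; simp only [hw0, hw30]; ring
    rw [this, hG0]
    have s1 := mul_self_nonneg (D L w 1 L)
    have s2 := mul_self_nonneg (D L w 1 0)
    have s3 := mul_self_nonneg (D L w 2 0)
    generalize D L w 1 L * D L w 1 L = A at s1 ⊢
    generalize D L w 1 0 * D L w 1 0 = B at s2 ⊢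
    generalize D L w 2 0 * D L w 2 0 = C at s3 ⊢
    nlinarith
  have hnn : (0:ℝ) ≤ ∫ x in (0:ℝ)..L, lam * w x * w x := by
    apply intervalIntegral.integral_nonneg hL.le
    intro x _
    rw [mul_assoc]
    exact mul_nonneg hlam.le (mul_self_nonneg _)
  have hzero : ∫ x in (0:ℝ)..L, lam * w x * w x = 0 := le_antisymm (hftc ▸ hGL) hnn
  -- conclude w = 0 a.e., hence everywhere
  have hpos : 0 ≤ᵐ[MeasureTheory.volume.restrict (Set.Ioc 0 L)] (fun x => lam * w x * w x) := by
    filter_upwards with x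
    show (0:ℝ) ≤ lam * w x * w x
    rw [mul_assoc]
    exact mul_nonneg hlam.le (mul_self_nonneg _)
  have hae : (fun x => lam * w x * w x) =ᵐ[MeasureTheory.volume.restrict (Set.Ioc 0 L)] 0 :=
    (intervalIntegral.integral_eq_zero_iff_of_le_of_nonneg_ae hL.le hpos hint).mp hzero
  have hc2 : ContinuousOn (fun x => lam * w x * w x) (Set.Icc 0 L) :=
    (continuousOn_const.mul hwc.continuousOn).mul hwc.continuousOn
  have hwz := aux_zero hL hc2 hae
  intro x hx
  have hx0 := hwz x hx
  have hww : w x * w x = 0 := by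
    rcases mul_eq_zero.mp hx0 with h' | h'
    · rcases mul_eq_zero.mp h' with h'' | h''
      · exact absurd h'' hlam.ne'
      · rw [h'']; ring
    · rw [h']; ring
  have hwx0 : w x = 0 := mul_self_eq_zero.mp hww
  have : u x - v x = 0 := hwx0
  linarith
end
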